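/- With X and X* the complementary vector fields X(ζ,t) = [η(ζ)/(η(ζ)+η'(γ(t)−ζ))]·γ'(t) and X*(ζ,t) = [η'(ζ)/(η'(ζ)+η(γ(t)−ζ))]·γ'(t) (where η(ζ) = dist(ζ, Ω), η'(ζ) = dist(ζ, Ω')), let H^s(t) solve dH^s/dt = X(H^s, t) and set K^s(t) = γ(t) − H^s(t). Then K^s satisfies dK^s/dt = X*(K^s, t), and for every t, |dH^s/dt| + |dK^s/dt| = |γ'(t)|; consequently ℒ(H^s) + ℒ(K^s) = ℒ(γ). -/

import Mathlib

open Set Metric MeasureTheory intervalIntegral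

/-- The deformation vector field
`X(ζ, t) = [η(ζ) / (η(ζ) + η'(γ(t) − ζ))] · γ'(t)` with `η = dist(·, Ω)`,
`η' = dist(·, Ω')`. -/
noncomputable def Xfield (Ω Ω' : Set ℂ) (γ γd : ℝ → ℂ) (ζ : ℂ) (t : ℝ) : ℂ :=
  (Metric.infDist ζ Ω / (Metric.infDist ζ Ω + Metric.infDist (γ t - ζ) Ω')) • γd t

/-- The complementary vector field
`X*(ζ, t) = [η'(ζ) / (η'(ζ) + η(γ(t) − ζ))] · γ'(t)`. -/
noncomputable def Xstarfield (Ω Ω' : Set ℂ) (γ γd : ℝ → ℂ) (ζ : ℂ) (t : ℝ) : ℂ :=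
  (Metric.infDist ζ Ω' / (Metric.infDist ζ Ω' + Metric.infDist (γ t - ζ) Ω)) • γd t

/-! Since `ζ ↦ γ(t) − ζ` swaps the roles of `η` and `η'`, the fields `X(ζ, t)` and
`X*(γ(t) − ζ, t)` are the multiples `p · γ'(t)` and `(1 − p) · γ'(t)` of `γ'(t)` with
`p ∈ [0, 1]`, as soon as the common denominator `η(ζ) + η'(γ(t) − ζ)` is nonzero; this is
where `γ(t) ∉ Ω + Ω'` enters. Both the velocities and their norms therefore add up to
those of `γ`, and integrating the norms gives the lengths. -/

theorem infDist_add_infDist_sub_pos {E : Type*} [AddCommGroup E] [PseudoMetricSpace E]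
    {s s' : Set E} (hs : IsClosed s) (hs' : IsClosed s') (hne : s.Nonempty)
    (hne' : s'.Nonempty) {z : E} (hz : ∀ a ∈ s, ∀ b ∈ s', z ≠ a + b) (x : E) :
    0 < infDist x s + infDist (z - x) s' := by
  refine (add_nonneg infDist_nonneg infDist_nonneg).lt_of_ne' fun h => ?_
  obtain ⟨hx, hzx⟩ := (add_eq_zero_iff_of_nonneg infDist_nonneg infDist_nonneg).1 h
  exact hz x ((hs.mem_iff_infDist_zero hne).2 hx) (z - x)
    ((hs'.mem_iff_infDist_zero hne').2 hzx) (add_sub_cancel x z).symm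

theorem div_add_div_add_comm_eq_one {K : Type*} [DivisionRing K] {a b : K}
    (h : a + b ≠ 0) : a / (a + b) + b / (b + a) = 1 := by
  rw [add_comm b a, ← add_div, div_self h]

theorem intervalIntegral.integral_add_eq_of_continuousOn {E : Type*} [NormedAddCommGroup E]
    [NormedSpace ℝ E] {a b : ℝ} {f g h : ℝ → E}
    (hab : a ≤ b) (hf : ContinuousOn f (Icc a b)) (hg : ContinuousOn g (Icc a b))
    (hfg : ∀ t ∈ Icc a b, f t + g t = h t) :
    (∫ t in a..b, f t) + (∫ t in a..b, g t) = ∫ t in a..b, h t := by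
  rw [← integral_add (hf.intervalIntegrable_of_Icc hab) (hg.intervalIntegrable_of_Icc hab)]
  exact integral_congr fun t ht => hfg t (uIcc_of_le hab ▸ ht)

section Fields

variable {Ω Ω' : Set ℂ} {γ γd : ℝ → ℂ} {ζ : ℂ} {t : ℝ}

theorem Xstarfield_sub_eq :
    Xstarfield Ω Ω' γ γd (γ t - ζ) t =
      (infDist (γ t - ζ) Ω' / (infDist (γ t - ζ) Ω' + infDist ζ Ω)) • γd t := by
  rw [Xstarfield, sub_sub_cancel]

theorem Xfield_add_Xstarfield_sub (h : infDist ζ Ω + infDist (γ t - ζ) Ω' ≠ 0) :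
    Xfield Ω Ω' γ γd ζ t + Xstarfield Ω Ω' γ γd (γ t - ζ) t = γd t := by
  rw [Xfield, Xstarfield_sub_eq, ← add_smul, div_add_div_add_comm_eq_one h, one_smul]

theorem norm_Xfield_add_norm_Xstarfield_sub (h : infDist ζ Ω + infDist (γ t - ζ) Ω' ≠ 0) :
    ‖Xfield Ω Ω' γ γd ζ t‖ + ‖Xstarfield Ω Ω' γ γd (γ t - ζ) t‖ = ‖γd t‖ := by
  rw [Xfield, Xstarfield_sub_eq, norm_smul, norm_smul,
    Real.norm_of_nonneg (div_nonneg infDist_nonneg (add_nonneg infDist_nonneg infDist_nonneg)),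
    Real.norm_of_nonneg (div_nonneg infDist_nonneg (add_nonneg infDist_nonneg infDist_nonneg)),
    ← add_mul, div_add_div_add_comm_eq_one h, one_mul]

theorem continuousOn_Xfield_comp {H : ℝ → ℂ} {s : Set ℝ} (hH : ContinuousOn H s)
    (hγ : ContinuousOn γ s) (hγd : ContinuousOn γd s)
    (h : ∀ t ∈ s, infDist (H t) Ω + infDist (γ t - H t) Ω' ≠ 0) :
    ContinuousOn (fun t => Xfield Ω Ω' γ γd (H t) t) s := by
  have hη : ContinuousOn (fun t => infDist (H t) Ω) s :=
    (continuous_infDist_pt Ω).comp_continuousOn hH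
  have hη' : ContinuousOn (fun t => infDist (γ t - H t) Ω') s :=
    (continuous_infDist_pt Ω').comp_continuousOn (hγ.sub hH)
  exact (hη.div (hη.add hη') h).smul hγd

end Fields

/-- If `H` solves `dH/dt = X(H, t)` then `K(t) = γ(t) − H(t)` solves
`dK/dt = X*(K, t)`, the speeds add up to `|γ'(t)|`, and hence the lengths add
up: `ℒ(H) + ℒ(K) = ℒ(γ)`. -/
theorem complementary_flow
    (Ω Ω' : Set ℂ) (hΩ : Ω.Finite) (hΩ' : Ω'.Finite)
    (hΩne : Ω.Nonempty) (hΩ'ne : Ω'.Nonempty)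
    (γ γd : ℝ → ℂ)
    (hγ : ∀ t ∈ Set.Icc (0 : ℝ) 1, HasDerivAt γ (γd t) t)
    (hγd : ContinuousOn γd (Set.Icc 0 1))
    (havoid : ∀ t ∈ Set.Icc (0 : ℝ) 1, ∀ a ∈ Ω, ∀ b ∈ Ω', γ t ≠ a + b)
    (H : ℝ → ℂ)
    (hH : ∀ t ∈ Set.Icc (0 : ℝ) 1, HasDerivAt H (Xfield Ω Ω' γ γd (H t) t) t) :
    (∀ t ∈ Set.Icc (0 : ℝ) 1,
      HasDerivAt (fun u => γ u - H u)
        (Xstarfield Ω Ω' γ γd (γ t - H t) t) t) ∧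
    (∀ t ∈ Set.Icc (0 : ℝ) 1,
      ‖Xfield Ω Ω' γ γd (H t) t‖ + ‖Xstarfield Ω Ω' γ γd (γ t - H t) t‖ = ‖γd t‖) ∧
    ((∫ t in (0 : ℝ)..1, ‖Xfield Ω Ω' γ γd (H t) t‖) +
        (∫ t in (0 : ℝ)..1, ‖Xstarfield Ω Ω' γ γd (γ t - H t) t‖) =
      ∫ t in (0 : ℝ)..1, ‖γd t‖) := by
  have hden : ∀ t ∈ Icc (0 : ℝ) 1, infDist (H t) Ω + infDist (γ t - H t) Ω' ≠ 0 :=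
    fun t ht => (infDist_add_infDist_sub_pos hΩ.isClosed hΩ'.isClosed hΩne hΩ'ne
      (havoid t ht) (H t)).ne'
  have hXstar : ∀ t ∈ Icc (0 : ℝ) 1,
      Xstarfield Ω Ω' γ γd (γ t - H t) t = γd t - Xfield Ω Ω' γ γd (H t) t :=
    fun t ht => eq_sub_of_add_eq' (Xfield_add_Xstarfield_sub (hden t ht))
  have hnorm : ∀ t ∈ Icc (0 : ℝ) 1,
      ‖Xfield Ω Ω' γ γd (H t) t‖ + ‖Xstarfield Ω Ω' γ γd (γ t - H t) t‖ = ‖γd t‖ :=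
    fun t ht => norm_Xfield_add_norm_Xstarfield_sub (hden t ht)
  refine ⟨fun t ht => hXstar t ht ▸ (hγ t ht).sub (hH t ht), hnorm, ?_⟩
  have hX : ContinuousOn (fun t => Xfield Ω Ω' γ γd (H t) t) (Icc 0 1) :=
    continuousOn_Xfield_comp (fun t ht => (hH t ht).continuousAt.continuousWithinAt)
      (fun t ht => (hγ t ht).continuousAt.continuousWithinAt) hγd hden
  exact integral_add_eq_of_continuousOn zero_le_one hX.norm
    ((hγd.sub hX).congr hXstar).norm hnorm
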